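/- arXiv:1105.0490 — 6 statements merged into one kernel-verified Lean document; each statement's English description precedes it below -/
import Mathlib

section
/- Let n ≥ 1 and let x₁,…,xₙ and σ₁,…,σₙ be real numbers with all σᵢ > 0. Define m* = {i : xᵢ² ≥ σᵢ²}. Then Σ_{i ∉ m*} xᵢ² + Σ_{i ∈ m*} σᵢ² ≤ 2 Σᵢ xᵢ²σᵢ²/(xᵢ² + σᵢ²). -/
open Finset

/-- The risk of the oracle in the class of binary filters is at most twice the risk of
the oracle in the maximal class of linear filter estimators. -/
theorem stmt_1 (n : ℕ) (hn : 1 ≤ n) (x σ2 : Fin n → ℝ) (hσ : ∀ i, 0 < σ2 i) :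
    ∑ i ∈ univ.filter (fun i => ¬ (x i ^ 2 ≥ σ2 i)), x i ^ 2
      + ∑ i ∈ univ.filter (fun i => x i ^ 2 ≥ σ2 i), σ2 i
    ≤ 2 * ∑ i, x i ^ 2 * σ2 i / (x i ^ 2 + σ2 i) := by
  rw [Finset.mul_sum, Finset.sum_filter, Finset.sum_filter, ← Finset.sum_add_distrib]
  apply Finset.sum_le_sum
  intro i _
  have hσi := hσ i
  have hx : (0:ℝ) ≤ x i ^ 2 := sq_nonneg _
  have hpos : 0 < x i ^ 2 + σ2 i := by linarith
  rw [mul_div_assoc', le_div_iff₀ hpos]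
  by_cases h : x i ^ 2 ≥ σ2 i <;> simp [h] <;> nlinarith
end

section
/- Let η be a real random variable with σ² := E[η²] > 0 and set γ = η²/σ². Assume P(γ > t) ≤ K e^{−t/β} for all t > 0. Let x ∈ ℝ, y = x + η, μ ≥ 0, and let Ê denote the event {y² ≥ 4σ²μ}. Then E[(η² − x²)·1_Ê] ≤ 2Kβσ²e^{−μ/β}. -/
open MeasureTheory

/-- First part of Lemma 1: on the selection event `{y² ≥ 4σ²μ}`,
`E[(η² - x²)·1_Ê] ≤ 2Kβσ²e^{-μ/β}` under the exponential tail condition on `γ = η²/σ²`. -/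
theorem stmt_8 {Ω : Type*} [MeasurableSpace Ω] (P : Measure Ω) [IsProbabilityMeasure P]
    (η : Ω → ℝ) (hηmeas : Measurable η)
    (σ2 : ℝ) (hσ : 0 < σ2) (hσdef : ∫ ω, (η ω) ^ 2 ∂P = σ2)
    (K β : ℝ) (hK : 0 < K) (hβ : 0 < β)
    (htail : ∀ t : ℝ, 0 < t → (P {ω | (η ω) ^ 2 / σ2 > t}).toReal ≤ K * Real.exp (-t / β))
    (x μ : ℝ) (hμ : 0 ≤ μ)
    (hint : Integrable (fun ω => ((η ω) ^ 2 - x ^ 2) *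
      (if (x + η ω) ^ 2 ≥ 4 * σ2 * μ then (1:ℝ) else 0)) P) :
    ∫ ω, ((η ω) ^ 2 - x ^ 2) * (if (x + η ω) ^ 2 ≥ 4 * σ2 * μ then (1:ℝ) else 0) ∂P
      ≤ 2 * K * β * σ2 * Real.exp (-μ / β) := by
  -- integrability of η²
  have hη2int : Integrable (fun ω => (η ω) ^ 2) P := by
    by_contra h
    rw [integral_undef h] at hσdef
    exact hσ.ne hσdef
  -- the dominating function h ω = max (γ ω - μ) 0
  set h : Ω → ℝ := fun ω => max ((η ω) ^ 2 / σ2 - μ) 0 with hh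
  have hhint : Integrable h P :=
    ((hη2int.div_const σ2).sub (integrable_const μ)).pos_part
  have hh_nonneg : ∀ ω, 0 ≤ h ω := fun ω => le_max_right _ _
  -- pointwise bound
  have hle : ∀ ω, ((η ω) ^ 2 - x ^ 2) *
      (if (x + η ω) ^ 2 ≥ 4 * σ2 * μ then (1:ℝ) else 0) ≤ 2 * σ2 * h ω := by
    intro ω
    by_cases hc : (x + η ω) ^ 2 ≥ 4 * σ2 * μ
    · rw [if_pos hc, mul_one]
      have h1 : (η ω) ^ 2 / σ2 - μ ≤ h ω := le_max_left _ _
      have hdiv : (η ω) ^ 2 / σ2 * σ2 = (η ω) ^ 2 := div_mul_cancel₀ _ hσ.ne'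
      nlinarith [sq_nonneg (x - η ω), mul_le_mul_of_nonneg_left h1 (by positivity : (0:ℝ) ≤ 2 * σ2)]
    · rw [if_neg hc, mul_zero]
      positivity
  have step1 : ∫ ω, ((η ω) ^ 2 - x ^ 2) *
      (if (x + η ω) ^ 2 ≥ 4 * σ2 * μ then (1:ℝ) else 0) ∂P ≤ ∫ ω, 2 * σ2 * h ω ∂P :=
    integral_mono hint (hhint.const_mul _) hle
  -- layer-cake bound for ∫ h
  have hlayer : ∫ ω, h ω ∂P = ∫ t in Set.Ioi (0:ℝ), (P {a | t < h a}).toReal :=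
    hhint.integral_eq_integral_meas_lt (Filter.Eventually.of_forall hh_nonneg)
  have hsets : ∀ t : ℝ, 0 < t → {a | t < h a} = {ω | (η ω) ^ 2 / σ2 > μ + t} := by
    intro t ht
    ext a
    simp only [Set.mem_setOf_eq, hh]
    constructor
    · intro hlt
      rcases max_cases ((η a) ^ 2 / σ2 - μ) 0 with ⟨he, _⟩ | ⟨he, _⟩
      · rw [he] at hlt; linarith
      · rw [he] at hlt; linarith
    · intro hgt
      calc t < (η a) ^ 2 / σ2 - μ := by linarith
        _ ≤ max ((η a) ^ 2 / σ2 - μ) 0 := le_max_left _ _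
  have htail' : ∀ t : ℝ, t ∈ Set.Ioi (0:ℝ) →
      (P {a | t < h a}).toReal ≤ (K * Real.exp (-μ / β)) * Real.exp (-β⁻¹ * t) := by
    intro t ht
    rw [hsets t ht]
    have := htail (μ + t) (by linarith [Set.mem_Ioi.mp ht])
    calc (P {ω | (η ω) ^ 2 / σ2 > μ + t}).toReal ≤ K * Real.exp (-(μ + t) / β) := this
      _ = (K * Real.exp (-μ / β)) * Real.exp (-β⁻¹ * t) := by
          rw [mul_assoc, ← Real.exp_add]; congr 1; field_simp; ring
  have hbint : IntegrableOn (fun t => (K * Real.exp (-μ / β)) * Real.exp (-β⁻¹ * t))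
      (Set.Ioi (0:ℝ)) := by
    exact (exp_neg_integrableOn_Ioi 0 (by positivity : (0:ℝ) < β⁻¹)).const_mul _
  have step2 : ∫ t in Set.Ioi (0:ℝ), (P {a | t < h a}).toReal ≤
      ∫ t in Set.Ioi (0:ℝ), (K * Real.exp (-μ / β)) * Real.exp (-β⁻¹ * t) := by
    refine integral_mono_of_nonneg (Filter.Eventually.of_forall fun t => ENNReal.toReal_nonneg)
      hbint ?_
    rw [Filter.EventuallyLE, ae_restrict_iff' measurableSet_Ioi]
    exact Filter.Eventually.of_forall htail'
  have hexp : ∫ t in Set.Ioi (0:ℝ), Real.exp (-β⁻¹ * t) = β := by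
    have := Real.integral_rpow_mul_exp_neg_mul_Ioi (a := 1) (r := β⁻¹) one_pos
      (by positivity : (0:ℝ) < β⁻¹)
    simp only [sub_self, Real.rpow_zero, one_mul, Real.rpow_one, Real.Gamma_one, mul_one,
      one_div, inv_inv] at this
    simp_rw [neg_mul]
    exact this
  have step3 : ∫ t in Set.Ioi (0:ℝ), (K * Real.exp (-μ / β)) * Real.exp (-β⁻¹ * t)
      = K * Real.exp (-μ / β) * β := by
    rw [integral_const_mul, hexp]
  have hfinal : ∫ ω, 2 * σ2 * h ω ∂P ≤ 2 * σ2 * (K * Real.exp (-μ / β) * β) := by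
    rw [integral_const_mul]
    have : ∫ ω, h ω ∂P ≤ K * Real.exp (-μ / β) * β := by
      rw [hlayer]; rw [step3] at step2; exact step2
    nlinarith [this]
  calc ∫ ω, ((η ω) ^ 2 - x ^ 2) *
        (if (x + η ω) ^ 2 ≥ 4 * σ2 * μ then (1:ℝ) else 0) ∂P
      ≤ 2 * σ2 * (K * Real.exp (-μ / β) * β) := le_trans step1 hfinal
    _ = 2 * K * β * σ2 * Real.exp (-μ / β) := by ring
end

section
/- Let η be a real random variable with σ² := E[η²] > 0, let x ∈ ℝ, y = x + η, μ ≥ 0, and let Ê^c denote the event {y² < 4σ²μ}. Then E[(x² − η²)·1_{Ê^c}] ≤ σ²(6μ + 2). -/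
open MeasureTheory

/-- Second part of Lemma 1: on the rejection event `{y² < 4σ²μ}`,
`E[(x² - η²)·1_{Ê^c}] ≤ σ²(6μ + 2)`. -/
theorem stmt_9 {Ω : Type*} [MeasurableSpace Ω] (P : Measure Ω) [IsProbabilityMeasure P]
    (η : Ω → ℝ) (hηmeas : Measurable η)
    (σ2 : ℝ) (hσ : 0 < σ2) (hσdef : ∫ ω, (η ω) ^ 2 ∂P = σ2)
    (hint2 : Integrable (fun ω => (η ω) ^ 2) P)
    (x μ : ℝ) (hμ : 0 ≤ μ)
    (hint : Integrable (fun ω => (x ^ 2 - (η ω) ^ 2) *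
      (if (x + η ω) ^ 2 < 4 * σ2 * μ then (1:ℝ) else 0)) P) :
    ∫ ω, (x ^ 2 - (η ω) ^ 2) * (if (x + η ω) ^ 2 < 4 * σ2 * μ then (1:ℝ) else 0) ∂P
      ≤ σ2 * (6 * μ + 2) := by
  have hmaj : Integrable (fun ω => 6 * σ2 * μ + 2 * (η ω) ^ 2) P :=
    (integrable_const _).add (hint2.const_mul 2)
  have hle : ∫ ω, (x ^ 2 - (η ω) ^ 2) * (if (x + η ω) ^ 2 < 4 * σ2 * μ then (1:ℝ) else 0) ∂P
      ≤ ∫ ω, 6 * σ2 * μ + 2 * (η ω) ^ 2 ∂P := by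
    refine integral_mono hint hmaj fun ω => ?_
    dsimp only
    split_ifs with h
    · nlinarith [sq_nonneg (x - η ω), sq_nonneg (x + 3 * η ω),
        mul_nonneg (mul_nonneg hσ.le hμ) (by norm_num : (0:ℝ) ≤ 4)]
    · simp only [mul_zero]
      have : 0 ≤ 6 * σ2 * μ := by positivity
      nlinarith [sq_nonneg (η ω)]
  calc _ ≤ ∫ ω, 6 * σ2 * μ + 2 * (η ω) ^ 2 ∂P := hle
    _ = 6 * σ2 * μ + 2 * σ2 := by
        rw [integral_add (integrable_const _) (hint2.const_mul 2),
          integral_const, integral_const_mul, hσdef]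
        simp
    _ ≤ σ2 * (6 * μ + 2) := by ring_nf; linarith
end

section
/- Let ξ be a real random variable and s, β' > 0 constants such that P(ξ²/s² > t) ≤ K' e^{−t/β'} for all t > 0. Then for every integer n ≥ 2, E[ξ²·1{ξ² > s²β' log n}] ≤ K'β's²(1 + log n)/n. -/
/-!
With `X = ξ²`, `c = s²β'` and `a = c log n`, the tail hypothesis reads `P(X > t) ≤ K' e^{-t/c}`
and `e^{-a/c} = 1/n`. By the layer cake formula, the truncated variable `X·1{X > a}` exceeds a level
`t > 0` exactly when `X > max t a`, so
`E[X·1{X > a}] = a·P(X > a) + ∫_a^∞ P(X > t) dt ≤ K'(a + c) e^{-a/c}`.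
-/

open MeasureTheory Set Real

theorem integrableOn_exp_neg_div_Ioi (a : ℝ) {c : ℝ} (hc : 0 < c) :
    IntegrableOn (fun t => exp (-t / c)) (Ioi a) := by
  refine (integrableOn_exp_mul_Ioi (neg_neg_of_pos (inv_pos.2 hc)) a).congr_fun
    (fun t _ => ?_) measurableSet_Ioi
  simp only [neg_mul, ← div_eq_inv_mul, neg_div]

theorem integral_exp_neg_div_Ioi (a : ℝ) {c : ℝ} (hc : 0 < c) :
    ∫ t in Ioi a, exp (-t / c) = c * exp (-a / c) := by
  have := integral_exp_mul_Ioi (neg_neg_of_pos (inv_pos.2 hc)) a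
  simp only [neg_mul, ← div_eq_inv_mul, ← neg_div] at this
  rw [this]
  field_simp

theorem lintegral_ofReal_mul_exp_neg_div_Ioi (a : ℝ) {c K : ℝ} (hc : 0 < c) (hK : 0 ≤ K) :
    ∫⁻ t in Ioi a, ENNReal.ofReal (K * exp (-t / c)) = ENNReal.ofReal (K * c * exp (-a / c)) := by
  rw [← ofReal_integral_eq_lintegral_ofReal ((integrableOn_exp_neg_div_Ioi a hc).const_mul K)
    (ae_of_all _ fun t => by positivity), integral_const_mul, integral_exp_neg_div_Ioi a hc, mul_assoc]

section TruncatedLayerCake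

variable {Ω : Type*} {X : Ω → ℝ} {a : ℝ}

theorem indicator_setOf_lt_nonneg (ha : 0 ≤ a) : 0 ≤ {ω | a < X ω}.indicator X :=
  indicator_nonneg fun _ h => ha.trans (le_of_lt h)

theorem setOf_lt_indicator_setOf_lt {t : ℝ} (ht : 0 ≤ t) :
    {ω | t < {ω | a < X ω}.indicator X ω} = {ω | max t a < X ω} := by
  ext ω
  by_cases h : a < X ω <;> simp [h, ht.not_gt]

variable [MeasurableSpace Ω] {μ : Measure Ω}

theorem lintegral_ofReal_indicator_setOf_lt (hX : Measurable X) (ha : 0 ≤ a) :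
    ∫⁻ ω, ENNReal.ofReal ({ω | a < X ω}.indicator X ω) ∂μ
      = ENNReal.ofReal a * μ {ω | a < X ω} + ∫⁻ t in Ioi a, μ {ω | t < X ω} := by
  rw [lintegral_eq_lintegral_meas_lt μ (.of_forall (indicator_setOf_lt_nonneg ha))
      (hX.indicator (measurableSet_lt measurable_const hX)).aemeasurable,
    ← Ioc_union_Ioi_eq_Ioi ha, lintegral_union measurableSet_Ioi (Ioc_disjoint_Ioi le_rfl)]
  congr 1
  · rw [setLIntegral_congr_fun measurableSet_Ioc fun t ht => by
        rw [setOf_lt_indicator_setOf_lt ht.1.le, max_eq_right ht.2],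
      setLIntegral_const, Real.volume_Ioc, sub_zero, mul_comm]
  · exact setLIntegral_congr_fun measurableSet_Ioi fun t ht => by
      rw [setOf_lt_indicator_setOf_lt (ha.trans ht.le), max_eq_left ht.le]

theorem integral_indicator_setOf_lt_le_of_tail [IsFiniteMeasure μ] (hX : Measurable X)
    (ha : 0 ≤ a) {c K : ℝ} (hc : 0 < c) (hK : 0 ≤ K)
    (htail : ∀ t, a ≤ t → μ.real {ω | t < X ω} ≤ K * exp (-t / c)) :
    ∫ ω, {ω | a < X ω}.indicator X ω ∂μ ≤ K * (a + c) * exp (-a / c) := by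
  have htail' : ∀ t, a ≤ t → μ {ω | t < X ω} ≤ ENNReal.ofReal (K * exp (-t / c)) := fun t ht =>
    (ENNReal.le_ofReal_iff_toReal_le (measure_ne_top _ _) (by positivity)).2 (htail t ht)
  rw [integral_eq_lintegral_of_nonneg_ae
      (.of_forall (indicator_setOf_lt_nonneg ha))
      (hX.indicator (measurableSet_lt measurable_const hX)).aestronglyMeasurable,
    lintegral_ofReal_indicator_setOf_lt hX ha]
  refine ENNReal.toReal_le_of_le_ofReal (by positivity) ?_
  calc ENNReal.ofReal a * μ {ω | a < X ω} + ∫⁻ t in Ioi a, μ {ω | t < X ω}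
      ≤ ENNReal.ofReal a * ENNReal.ofReal (K * exp (-a / c))
          + ∫⁻ t in Ioi a, ENNReal.ofReal (K * exp (-t / c)) :=
        add_le_add (mul_le_mul_right (htail' a le_rfl) _)
          (setLIntegral_mono' measurableSet_Ioi fun t ht => htail' t (le_of_lt ht))
    _ = ENNReal.ofReal (K * (a + c) * exp (-a / c)) := by
        rw [lintegral_ofReal_mul_exp_neg_div_Ioi a hc hK, ← ENNReal.ofReal_mul ha,
          ← ENNReal.ofReal_add (by positivity) (by positivity)]
        ring_nf

end TruncatedLayerCake

theorem stmt_10_general {Ω : Type*} [MeasurableSpace Ω] (P : Measure Ω) [IsProbabilityMeasure P]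
    (ξ : Ω → ℝ) (hξmeas : Measurable ξ)
    (s β' K' : ℝ) (hs : 0 < s) (hβ' : 0 < β') (hK' : 0 < K')
    (htail : ∀ t : ℝ, 0 < t → (P {ω | (ξ ω) ^ 2 / s ^ 2 > t}).toReal ≤ K' * Real.exp (-t / β'))
    (n : ℕ) (hn : 2 ≤ n) :
    ∫ ω, (ξ ω) ^ 2 * (if (ξ ω) ^ 2 > s ^ 2 * β' * Real.log n then (1:ℝ) else 0) ∂P
      ≤ K' * β' * s ^ 2 * (1 + Real.log n) / n := by
  set c := s ^ 2 * β'
  have hlog : 0 < Real.log n := Real.log_pos (by exact_mod_cast hn)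
  have hs2 : 0 < s ^ 2 := by positivity
  have hsq_tail : ∀ t, c * Real.log n ≤ t → P.real {ω | t < ξ ω ^ 2} ≤ K' * exp (-t / c) := by
    intro t ht
    have := htail (t / s ^ 2) (div_pos ((by positivity : 0 < c * Real.log n).trans_le ht) hs2)
    simpa only [gt_iff_lt, div_lt_div_iff_of_pos_right hs2, neg_div, div_div,
      measureReal_def] using this
  have hexp : exp (-(c * Real.log n) / c) = (n : ℝ)⁻¹ := by
    rw [neg_div, mul_div_cancel_left₀ _ (by positivity), exp_neg, exp_log (by positivity)]
  calc ∫ ω, ξ ω ^ 2 * (if ξ ω ^ 2 > c * Real.log n then (1:ℝ) else 0) ∂P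
      = ∫ ω, {ω | c * Real.log n < ξ ω ^ 2}.indicator (fun ω => ξ ω ^ 2) ω ∂P := by
        simp only [indicator_apply, mem_ofPred_eq, gt_iff_lt, mul_ite, mul_one, mul_zero]
    _ ≤ K' * (c * Real.log n + c) * exp (-(c * Real.log n) / c) :=
        integral_indicator_setOf_lt_le_of_tail (hξmeas.pow_const 2) (by positivity)
          (by positivity) hK'.le hsq_tail
    _ = K' * β' * s ^ 2 * (1 + Real.log n) / n := by
        rw [hexp]
        ring

/-- Lemma 4: truncated second moment bound under an exponential tail assumption:
`E[ξ²·1{ξ² > s²β' log n}] ≤ K'β's²(1 + log n)/n`. -/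
theorem stmt_10 {Ω : Type*} [MeasurableSpace Ω] (P : Measure Ω) [IsProbabilityMeasure P]
    (ξ : Ω → ℝ) (hξmeas : Measurable ξ)
    (s β' K' : ℝ) (hs : 0 < s) (hβ' : 0 < β') (hK' : 0 < K')
    (htail : ∀ t : ℝ, 0 < t → (P {ω | (ξ ω) ^ 2 / s ^ 2 > t}).toReal ≤ K' * Real.exp (-t / β'))
    (n : ℕ) (hn : 2 ≤ n)
    (hint : Integrable (fun ω => (ξ ω) ^ 2 *
      (if (ξ ω) ^ 2 > s ^ 2 * β' * Real.log n then (1:ℝ) else 0)) P) :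
    ∫ ω, (ξ ω) ^ 2 * (if (ξ ω) ^ 2 > s ^ 2 * β' * Real.log n then (1:ℝ) else 0) ∂P
      ≤ K' * β' * s ^ 2 * (1 + Real.log n) / n :=
  stmt_10_general P ξ hξmeas s β' K' hs hβ' hK' htail n hn
end

section
/- Let n ≥ 2 and for i = 1,…,n let xᵢ ∈ ℝ, σᵢ² > 0, and let ηᵢ be random variables with E[ηᵢ²] = σᵢ², γᵢ = ηᵢ²/σᵢ² satisfying P(γᵢ > t) ≤ K e^{−t/β} for all t > 0. Let yᵢ = xᵢ + ηᵢ, set μᵢ = max{β log(n²σᵢ²), 0}, m̂ = {i : yᵢ² ≥ 4σᵢ²μᵢ}, and m* = {i : xᵢ² ≥ σᵢ²}. Then E[Σ_{i∉m*}(ηᵢ² − xᵢ²)1{i ∈ m̂}] ≤ 2Kβ/n. -/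
open MeasureTheory Finset

private lemma ptwise_bd (a x s m : ℝ) :
    (a^2 - x^2) * (if (x+a)^2 ≥ 4*s*m then (1:ℝ) else 0) ≤ 2 * max (a^2 - s*m) 0 := by
  have hc : 4*s*m = 4*(s*m) := by ring
  rw [hc]
  set c := s*m with hcdef
  clear_value c
  split_ifs with h
  · rw [mul_one]
    rcases le_total (a^2) c with h2 | h2
    · have hx : a^2 - x^2 ≤ 0 := by nlinarith [sq_nonneg (x - a)]
      have h0 : (0:ℝ) ≤ 2 * max (a^2-c) 0 := by positivity
      linarith
    · have hmax : max (a^2-c) 0 = a^2 - c := max_eq_left (by linarith)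
      rw [hmax]
      rcases le_total (x^2) c with h3 | h3
      · nlinarith [sq_nonneg (a - x)]
      · linarith
  · rw [mul_zero]; positivity

private lemma exp_int (b : ℝ) (hb : 0 < b) :
    ∫ t in Set.Ioi (0:ℝ), Real.exp (-(b*t)) = b⁻¹ := by
  have h := MeasureTheory.integral_comp_mul_left_Ioi (fun u => Real.exp (-u)) 0 hb
  have h2 : ∫ u in Set.Ioi (0:ℝ), Real.exp (-u) = 1 := integral_exp_neg_Ioi_zero
  simp only [mul_zero, h2, smul_eq_mul, mul_one] at h
  simpa using h

private lemma coord_bound {Ω : Type*} [MeasurableSpace Ω] (P : Measure Ω)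
    [IsProbabilityMeasure P] (σ2i : ℝ) (hσ : 0 < σ2i) (ηi : Ω → ℝ)
    (hint : Integrable (fun ω => ηi ω ^ 2) P)
    (K β μi : ℝ) (hK : 0 < K) (hβ : 0 < β) (hμ : 0 ≤ μi)
    (htail : ∀ t : ℝ, 0 < t → (P {ω | ηi ω ^ 2 / σ2i > t}).toReal ≤ K * Real.exp (-t/β)) :
    ∫ ω, max (ηi ω ^ 2 - σ2i * μi) 0 ∂P ≤ K * β * σ2i * Real.exp (-μi/β) := by
  have f_int : Integrable (fun ω => max (ηi ω ^ 2 - σ2i * μi) 0) P :=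
    (hint.sub (integrable_const _)).pos_part
  rw [f_int.integral_eq_integral_meas_lt (ae_of_all _ fun ω => le_max_right _ _)]
  have hb : 0 < (σ2i * β)⁻¹ := by positivity
  have key : ∫ t in Set.Ioi (0:ℝ),
      (P {a | t < max (ηi a ^ 2 - σ2i * μi) 0}).toReal
      ≤ ∫ t in Set.Ioi (0:ℝ), K * Real.exp (-μi/β) * Real.exp (-((σ2i*β)⁻¹ * t)) := by
    apply integral_mono_of_nonneg
    · exact ae_of_all _ fun t => ENNReal.toReal_nonneg
    · have := (exp_neg_integrableOn_Ioi 0 hb).const_mul (K * Real.exp (-μi/β))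
      simpa [neg_mul] using this
    · rw [Filter.EventuallyLE, ae_restrict_iff' measurableSet_Ioi]
      filter_upwards with t ht
      have ht0 : (0:ℝ) < t := ht
      have ht' : (0:ℝ) < μi + t / σ2i :=
        add_pos_of_nonneg_of_pos hμ (div_pos ht0 hσ)
      have hkey : (μi + t / σ2i) * σ2i = σ2i * μi + t := by field_simp
      have hset : {a | t < max (ηi a ^ 2 - σ2i * μi) 0}
          = {ω | ηi ω ^ 2 / σ2i > μi + t / σ2i} := by
        ext a
        simp only [Set.mem_setOf_eq, lt_max_iff, gt_iff_lt]
        constructor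
        · rintro (h | h)
          · rw [lt_div_iff₀ hσ, hkey]; linarith
          · exact absurd h (not_lt.2 ht0.le)
        · intro h
          left
          rw [lt_div_iff₀ hσ, hkey] at h
          linarith
      rw [hset]
      calc (P {ω | ηi ω ^ 2 / σ2i > μi + t / σ2i}).toReal
          ≤ K * Real.exp (-(μi + t / σ2i)/β) := htail _ ht'
        _ = K * Real.exp (-μi/β) * Real.exp (-((σ2i*β)⁻¹ * t)) := by
            rw [mul_assoc, ← Real.exp_add]
            congr 1
            field_simp
            ring
  refine key.trans (le_of_eq ?_)
  rw [MeasureTheory.integral_const_mul, exp_int _ hb]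
  field_simp

/-- Part of the proof of Theorem 1: the cumulative error from wrongly selected
coordinates outside the oracle set is at most `2Kβ/n`. -/
theorem stmt_16 {Ω : Type*} [MeasurableSpace Ω] (P : Measure Ω) [IsProbabilityMeasure P]
    (n : ℕ) (hn : 2 ≤ n) (x σ2 : Fin n → ℝ) (hσ : ∀ i, 0 < σ2 i)
    (η : Fin n → Ω → ℝ) (hηmeas : ∀ i, Measurable (η i))
    (hη2 : ∀ i, ∫ ω, (η i ω) ^ 2 ∂P = σ2 i)
    (K β : ℝ) (hK : 0 < K) (hβ : 0 < β)
    (htail : ∀ i, ∀ t : ℝ, 0 < t →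
      (P {ω | (η i ω) ^ 2 / σ2 i > t}).toReal ≤ K * Real.exp (-t / β))
    (μ : Fin n → ℝ) (hμ : ∀ i, μ i = max (β * Real.log ((n : ℝ) ^ 2 * σ2 i)) 0)
    (hint : Integrable (fun ω => ∑ i ∈ univ.filter (fun i => ¬ (x i ^ 2 ≥ σ2 i)),
      ((η i ω) ^ 2 - x i ^ 2) *
        (if (x i + η i ω) ^ 2 ≥ 4 * σ2 i * μ i then (1:ℝ) else 0)) P) :
    ∫ ω, ∑ i ∈ univ.filter (fun i => ¬ (x i ^ 2 ≥ σ2 i)),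
        ((η i ω) ^ 2 - x i ^ 2) *
          (if (x i + η i ω) ^ 2 ≥ 4 * σ2 i * μ i then (1:ℝ) else 0) ∂P
      ≤ 2 * K * β / n := by
  have hn0 : (0:ℝ) < n := by positivity
  -- η i ^ 2 is integrable
  have hη2int : ∀ i, Integrable (fun ω => (η i ω) ^ 2) P := by
    intro i
    by_contra h
    have h2 := hη2 i
    rw [integral_undef h] at h2
    exact absurd h2.symm (hσ i).ne'
  have hμ0 : ∀ i, 0 ≤ μ i := fun i => (hμ i) ▸ le_max_right _ _
  -- each summand is integrable
  have hFint : ∀ i : Fin n, Integrable (fun ω => ((η i ω) ^ 2 - x i ^ 2) *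
      (if (x i + η i ω) ^ 2 ≥ 4 * σ2 i * μ i then (1:ℝ) else 0)) P := by
    intro i
    have hmeasF : Measurable (fun ω => ((η i ω) ^ 2 - x i ^ 2) *
        (if (x i + η i ω) ^ 2 ≥ 4 * σ2 i * μ i then (1:ℝ) else 0)) := by
      apply Measurable.mul
      · exact ((hηmeas i).pow_const 2).sub_const _
      · exact Measurable.ite
          (measurableSet_le measurable_const ((measurable_const.add (hηmeas i)).pow_const 2))
          measurable_const measurable_const
    refine Integrable.mono ((hη2int i).add (integrable_const (x i ^ 2)))
      hmeasF.aestronglyMeasurable (ae_of_all _ fun ω => ?_)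
    have hind : |(if (x i + η i ω) ^ 2 ≥ 4 * σ2 i * μ i then (1:ℝ) else 0)| ≤ 1 := by
      split_ifs <;> norm_num
    rw [Real.norm_eq_abs, Real.norm_eq_abs, abs_mul]
    calc |(η i ω) ^ 2 - x i ^ 2| * |(if (x i + η i ω) ^ 2 ≥ 4 * σ2 i * μ i then (1:ℝ) else 0)|
        ≤ |(η i ω) ^ 2 - x i ^ 2| * 1 := by
          exact mul_le_mul_of_nonneg_left hind (abs_nonneg _)
      _ = |(η i ω) ^ 2 - x i ^ 2| := mul_one _
      _ ≤ |(η i ω) ^ 2| + |x i ^ 2| := abs_sub _ _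
      _ ≤ |(η i ω) ^ 2 + x i ^ 2| := by
          rw [abs_of_nonneg (sq_nonneg (η i ω)), abs_of_nonneg (sq_nonneg (x i)),
            abs_of_nonneg (by positivity : (0:ℝ) ≤ (η i ω) ^ 2 + x i ^ 2)]
  rw [integral_finset_sum _ (fun i _ => hFint i)]
  -- per coordinate bound
  have hcoord : ∀ i : Fin n,
      ∫ ω, ((η i ω) ^ 2 - x i ^ 2) *
        (if (x i + η i ω) ^ 2 ≥ 4 * σ2 i * μ i then (1:ℝ) else 0) ∂P
        ≤ 2 * K * β / (n:ℝ)^2 := by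
    intro i
    have hmaxint : Integrable (fun ω => max ((η i ω) ^ 2 - σ2 i * μ i) 0) P :=
      ((hη2int i).sub (integrable_const _)).pos_part
    have step1 : ∫ ω, ((η i ω) ^ 2 - x i ^ 2) *
        (if (x i + η i ω) ^ 2 ≥ 4 * σ2 i * μ i then (1:ℝ) else 0) ∂P
        ≤ ∫ ω, 2 * max ((η i ω) ^ 2 - σ2 i * μ i) 0 ∂P := by
      refine integral_mono (hFint i) (hmaxint.const_mul 2) fun ω => ?_
      exact ptwise_bd (η i ω) (x i) (σ2 i) (μ i)
    have step2 : ∫ ω, max ((η i ω) ^ 2 - σ2 i * μ i) 0 ∂P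
        ≤ K * β * σ2 i * Real.exp (-(μ i)/β) :=
      coord_bound P (σ2 i) (hσ i) (η i) (hη2int i) K β (μ i) hK hβ (hμ0 i) (htail i)
    have step3 : σ2 i * Real.exp (-(μ i)/β) ≤ 1 / (n:ℝ)^2 := by
      rcases le_or_gt (Real.log ((n : ℝ) ^ 2 * σ2 i)) 0 with hl | hl
      · have hμi : μ i = 0 := by
          rw [hμ i, max_eq_right (mul_nonpos_of_nonneg_of_nonpos hβ.le hl)]
        have : (n : ℝ)^2 * σ2 i ≤ 1 := by
          have := Real.exp_le_exp.2 hl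
          rwa [Real.exp_log (mul_pos (pow_pos hn0 2) (hσ i)), Real.exp_zero] at this
        rw [hμi, neg_zero, zero_div, Real.exp_zero, mul_one,
          le_div_iff₀ (pow_pos hn0 2), mul_comm]
        exact this
      · have hμi : μ i = β * Real.log ((n : ℝ) ^ 2 * σ2 i) := by
          rw [hμ i, max_eq_left (mul_nonneg hβ.le hl.le)]
        rw [hμi]
        rw [show -(β * Real.log ((n : ℝ) ^ 2 * σ2 i)) / β
            = -Real.log ((n : ℝ) ^ 2 * σ2 i) by
              rw [neg_div, mul_div_cancel_left₀ _ hβ.ne']]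
        rw [Real.exp_neg, Real.exp_log (mul_pos (pow_pos hn0 2) (hσ i))]
        rw [mul_inv, ← mul_assoc]
        rw [mul_comm (σ2 i) (((n:ℝ)^2)⁻¹), mul_assoc,
          mul_inv_cancel₀ (hσ i).ne', mul_one, one_div]
    calc ∫ ω, ((η i ω) ^ 2 - x i ^ 2) *
        (if (x i + η i ω) ^ 2 ≥ 4 * σ2 i * μ i then (1:ℝ) else 0) ∂P
        ≤ ∫ ω, 2 * max ((η i ω) ^ 2 - σ2 i * μ i) 0 ∂P := step1
      _ = 2 * ∫ ω, max ((η i ω) ^ 2 - σ2 i * μ i) 0 ∂P := integral_const_mul 2 _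
      _ ≤ 2 * (K * β * σ2 i * Real.exp (-(μ i)/β)) := by
          refine mul_le_mul_of_nonneg_left step2 (by norm_num)
      _ = 2 * K * β * (σ2 i * Real.exp (-(μ i)/β)) := by ring
      _ ≤ 2 * K * β * (1 / (n:ℝ)^2) := by
          refine mul_le_mul_of_nonneg_left step3 (by positivity)
      _ = 2 * K * β / (n:ℝ)^2 := by ring
  calc ∑ i ∈ univ.filter (fun i => ¬ (x i ^ 2 ≥ σ2 i)),
      ∫ ω, ((η i ω) ^ 2 - x i ^ 2) *
        (if (x i + η i ω) ^ 2 ≥ 4 * σ2 i * μ i then (1:ℝ) else 0) ∂P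
      ≤ ∑ _i ∈ univ.filter (fun i => ¬ (x i ^ 2 ≥ σ2 i)), (2 * K * β / (n:ℝ)^2) :=
        Finset.sum_le_sum fun i _ => hcoord i
    _ = ((univ.filter (fun i => ¬ (x i ^ 2 ≥ σ2 i))).card : ℝ) * (2 * K * β / (n:ℝ)^2) := by
        rw [Finset.sum_const, nsmul_eq_mul]
    _ ≤ (n : ℝ) * (2 * K * β / (n:ℝ)^2) := by
        refine mul_le_mul_of_nonneg_right ?_ (by positivity)
        have hcard : (univ.filter (fun i => ¬ (x i ^ 2 ≥ σ2 i))).card ≤ n :=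
          (Finset.card_filter_le _ _).trans (by simp)
        exact_mod_cast hcard
    _ = 2 * K * β / n := by field_simp
end

section
/- Let n ≥ 2 and for i ∈ m* = {i : xᵢ² ≥ σᵢ²} let yᵢ = xᵢ + ηᵢ with E[ηᵢ²] = σᵢ² > 0, and set μᵢ = max{β log(n²σᵢ²), 0} and m̂ = {i : yᵢ² ≥ 4σᵢ²μᵢ}. Assume Σᵢ xᵢ² ≤ R for some R ≥ 1. Then E[Σ_{i∈m*}(xᵢ² − ηᵢ²)1{i ∉ m̂}] ≤ (12β log n + 6β log R + 2) Σ_{i∈m*} σᵢ². -/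
open MeasureTheory Finset

/-- Part of the proof of Theorem 1: error from wrongly rejected coordinates inside
the oracle set. -/
theorem stmt_17 {Ω : Type*} [MeasurableSpace Ω] (P : Measure Ω) [IsProbabilityMeasure P]
    (n : ℕ) (hn : 2 ≤ n) (x σ2 : Fin n → ℝ) (hσ : ∀ i, 0 < σ2 i)
    (η : Fin n → Ω → ℝ) (hηmeas : ∀ i, Measurable (η i))
    (hη2 : ∀ i, ∫ ω, (η i ω) ^ 2 ∂P = σ2 i)
    (hint2 : ∀ i, Integrable (fun ω => (η i ω) ^ 2) P)
    (β : ℝ) (hβ : 0 < β)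
    (μ : Fin n → ℝ) (hμ : ∀ i, μ i = max (β * Real.log ((n : ℝ) ^ 2 * σ2 i)) 0)
    (R : ℝ) (hR : 1 ≤ R) (hxR : ∑ i, x i ^ 2 ≤ R)
    (hint : Integrable (fun ω => ∑ i ∈ univ.filter (fun i => x i ^ 2 ≥ σ2 i),
      (x i ^ 2 - (η i ω) ^ 2) *
        (if ¬ ((x i + η i ω) ^ 2 ≥ 4 * σ2 i * μ i) then (1:ℝ) else 0)) P) :
    ∫ ω, ∑ i ∈ univ.filter (fun i => x i ^ 2 ≥ σ2 i),
        (x i ^ 2 - (η i ω) ^ 2) *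
          (if ¬ ((x i + η i ω) ^ 2 ≥ 4 * σ2 i * μ i) then (1:ℝ) else 0) ∂P
      ≤ (12 * β * Real.log n + 6 * β * Real.log R + 2)
          * ∑ i ∈ univ.filter (fun i => x i ^ 2 ≥ σ2 i), σ2 i := by
  set S := univ.filter (fun i => x i ^ 2 ≥ σ2 i) with hS
  have hμnn : ∀ i, 0 ≤ μ i := fun i => (hμ i) ▸ le_max_right _ _
  -- pointwise bound
  have hpt : ∀ ω, ∑ i ∈ S, (x i ^ 2 - (η i ω) ^ 2) *
      (if ¬ ((x i + η i ω) ^ 2 ≥ 4 * σ2 i * μ i) then (1:ℝ) else 0)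
      ≤ ∑ i ∈ S, (6 * σ2 i * μ i + 2 * (η i ω) ^ 2) := by
    intro ω
    apply Finset.sum_le_sum
    intro i _
    by_cases h : (x i + η i ω) ^ 2 ≥ 4 * σ2 i * μ i
    · rw [if_neg (not_not_intro h), mul_zero]
      nlinarith [(hσ i).le, hμnn i, sq_nonneg (η i ω)]
    · rw [if_pos h, mul_one]
      push_neg at h
      nlinarith [sq_nonneg (x i + 3 * η i ω), (hσ i).le, hμnn i]
  -- integrability of the bound
  have hgint : Integrable (fun ω => ∑ i ∈ S, (6 * σ2 i * μ i + 2 * (η i ω) ^ 2)) P :=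
    integrable_finset_sum _ fun i _ =>
      (integrable_const _).add ((hint2 i).const_mul 2)
  have h1 : ∫ ω, ∑ i ∈ S, (x i ^ 2 - (η i ω) ^ 2) *
      (if ¬ ((x i + η i ω) ^ 2 ≥ 4 * σ2 i * μ i) then (1:ℝ) else 0) ∂P
      ≤ ∫ ω, ∑ i ∈ S, (6 * σ2 i * μ i + 2 * (η i ω) ^ 2) ∂P :=
    integral_mono hint hgint hpt
  have h2 : ∫ ω, ∑ i ∈ S, (6 * σ2 i * μ i + 2 * (η i ω) ^ 2) ∂P
      = ∑ i ∈ S, (6 * σ2 i * μ i + 2 * σ2 i) := by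
    rw [integral_finset_sum (f := fun i ω => 6 * σ2 i * μ i + 2 * (η i ω) ^ 2) _
      (fun i _ => (integrable_const _).add ((hint2 i).const_mul 2))]
    apply Finset.sum_congr rfl
    intro i _
    rw [integral_add (integrable_const _) ((hint2 i).const_mul 2),
      integral_const, integral_const_mul, hη2 i]
    simp
  have hlogn : 0 ≤ Real.log n := Real.log_nonneg (by exact_mod_cast le_trans (by norm_num) hn)
  have hlogR : 0 ≤ Real.log R := Real.log_nonneg hR
  have h3 : ∑ i ∈ S, (6 * σ2 i * μ i + 2 * σ2 i)
      ≤ (12 * β * Real.log n + 6 * β * Real.log R + 2) * ∑ i ∈ S, σ2 i := by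
    rw [Finset.mul_sum]
    apply Finset.sum_le_sum
    intro i hi
    have hxi : σ2 i ≤ x i ^ 2 := by
      simp only [hS, mem_filter] at hi; exact hi.2
    have hxR' : x i ^ 2 ≤ R :=
      le_trans (Finset.single_le_sum (fun j _ => sq_nonneg (x j)) (mem_univ i)) hxR
    have hσR : σ2 i ≤ R := le_trans hxi hxR'
    have hn0 : (0:ℝ) < (n:ℝ) ^ 2 := by positivity
    have hμle : μ i ≤ β * (2 * Real.log n + Real.log R) := by
      rw [hμ i]
      apply max_le
      · apply mul_le_mul_of_nonneg_left _ hβ.le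
        calc Real.log ((n:ℝ) ^ 2 * σ2 i) ≤ Real.log ((n:ℝ) ^ 2 * R) :=
              Real.log_le_log (mul_pos hn0 (hσ i)) (by nlinarith [(hσ i).le])
          _ = 2 * Real.log n + Real.log R := by
              rw [Real.log_mul (ne_of_gt hn0) (by linarith), Real.log_pow]
              push_cast; ring
      · exact mul_nonneg hβ.le (by linarith)
    nlinarith [(hσ i).le, hμnn i]
  linarith
end
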